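/- arXiv:1704.04480 — 5 statements merged into one kernel-verified Lean document; each statement's English description precedes it below -/
import Mathlib

section
/- Let A₀, …, A_{n-1}, A_n be pairwise disjoint infinite subsets of a set U, and let M be the collection of subsets A ⊆ A₀ ∪ ⋯ ∪ A_n such that A ∩ A_i is finite or cofinite in A_i for each i < n, and A ∩ A_n is finite. Then M is closed under union, intersection, and relative complement, contains all singletons of its members' elements, and ordered by inclusion forms an unbounded atomic relatively complemented distributive lattice. -/
/-!
Finite-or-cofinite subsets of a fixed set `B` form a Boolean algebra: the condition is symmetric
under complementation and preserved by unions, so it is preserved by intersections and differences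
too. Everything else is bookkeeping, except unboundedness: a candidate top element meets the
infinite set `A n` in a finite set only, so it misses some point of `A n`, whose singleton lies
in `M`.
-/

open Set

section

variable {U : Type*}

def FiniteOrCofiniteIn (B s : Set U) : Prop := (s ∩ B).Finite ∨ (B \ s).Finite

namespace FiniteOrCofiniteIn

variable {B s t : Set U}

theorem of_finite (hs : s.Finite) : FiniteOrCofiniteIn B s :=
  Or.inl (hs.inter_of_left B)

theorem compl (hs : FiniteOrCofiniteIn B s) : FiniteOrCofiniteIn B sᶜ := by
  unfold FiniteOrCofiniteIn at hs ⊢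
  rwa [inter_comm, ← sdiff_eq, sdiff_compl, inter_comm B, or_comm]

theorem union (hs : FiniteOrCofiniteIn B s) (ht : FiniteOrCofiniteIn B t) :
    FiniteOrCofiniteIn B (s ∪ t) := by
  rcases hs with hs | hs
  · rcases ht with ht | ht
    · exact Or.inl (by rw [union_inter_distrib_right]; exact hs.union ht)
    · exact Or.inr (ht.subset (sdiff_subset_sdiff_right subset_union_right))
  · exact Or.inr (hs.subset (sdiff_subset_sdiff_right subset_union_left))

theorem inter (hs : FiniteOrCofiniteIn B s) (ht : FiniteOrCofiniteIn B t) :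
    FiniteOrCofiniteIn B (s ∩ t) := by
  simpa only [compl_union, compl_compl] using (hs.compl.union ht.compl).compl

theorem diff (hs : FiniteOrCofiniteIn B s) (ht : FiniteOrCofiniteIn B t) :
    FiniteOrCofiniteIn B (s \ t) :=
  hs.inter ht.compl

end FiniteOrCofiniteIn

variable {ι : Type*} (A : ι → Set U) (S : Set ι) (j : ι)

/-- The collection `M` of the theorem is `finCofinLattice A {i | i < n} (Fin.last n)`. -/
def finCofinLattice : Set (Set U) :=
  {s | s ⊆ ⋃ i, A i ∧ (∀ i ∈ S, FiniteOrCofiniteIn (A i) s) ∧ (s ∩ A j).Finite}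

variable {A S j} {s t : Set U}

theorem union_mem_finCofinLattice (hs : s ∈ finCofinLattice A S j)
    (ht : t ∈ finCofinLattice A S j) : s ∪ t ∈ finCofinLattice A S j := by
  obtain ⟨hsA, hsS, hsj⟩ := hs
  obtain ⟨htA, htS, htj⟩ := ht
  refine ⟨union_subset hsA htA, fun i hi => (hsS i hi).union (htS i hi), ?_⟩
  rw [union_inter_distrib_right]
  exact hsj.union htj

theorem inter_mem_finCofinLattice (hs : s ∈ finCofinLattice A S j)
    (ht : t ∈ finCofinLattice A S j) : s ∩ t ∈ finCofinLattice A S j :=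
  ⟨inter_subset_left.trans hs.1, fun i hi => (hs.2.1 i hi).inter (ht.2.1 i hi),
    hs.2.2.subset (inter_subset_inter_left _ inter_subset_left)⟩

theorem diff_mem_finCofinLattice (hs : s ∈ finCofinLattice A S j)
    (ht : t ∈ finCofinLattice A S j) : s \ t ∈ finCofinLattice A S j :=
  ⟨sdiff_subset.trans hs.1, fun i hi => (hs.2.1 i hi).diff (ht.2.1 i hi),
    hs.2.2.subset (inter_subset_inter_left _ sdiff_subset)⟩

theorem mem_finCofinLattice_of_finite (hs : s.Finite) (hsA : s ⊆ ⋃ i, A i) :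
    s ∈ finCofinLattice A S j :=
  ⟨hsA, fun _ _ => .of_finite hs, hs.inter_of_left _⟩

theorem singleton_mem_finCofinLattice {x : U} (hx : x ∈ ⋃ i, A i) :
    {x} ∈ finCofinLattice A S j :=
  mem_finCofinLattice_of_finite (finite_singleton x) (singleton_subset_iff.mpr hx)

theorem singleton_mem_finCofinLattice_of_mem {x : U} (hs : s ∈ finCofinLattice A S j)
    (hx : x ∈ s) : {x} ∈ finCofinLattice A S j :=
  singleton_mem_finCofinLattice (hs.1 hx)

theorem not_exists_top_finCofinLattice (hj : (A j).Infinite) :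
    ¬ ∃ t ∈ finCofinLattice A S j, ∀ s ∈ finCofinLattice A S j, s ⊆ t := by
  rintro ⟨t, ht, htop⟩
  obtain ⟨x, hxj, hxt⟩ : (A j \ t).Nonempty := by
    rw [← sdiff_inter_self_eq_sdiff]
    exact (hj.sdiff ht.2.2).nonempty
  exact hxt (htop {x} (singleton_mem_finCofinLattice (mem_iUnion_of_mem j hxj)) rfl)

end

theorem stmt3_general {U : Type*} (n : ℕ) (A : Fin (n + 1) → Set U)
    (hinf : ∀ i, (A i).Infinite)
    (M : Set (Set U))
    (hM : M = {s | s ⊆ ⋃ i, A i ∧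
      (∀ i : Fin (n + 1), (i : ℕ) < n → (s ∩ A i).Finite ∨ (A i \ s).Finite) ∧
      (s ∩ A (Fin.last n)).Finite}) :
    (∀ s ∈ M, ∀ t ∈ M, s ∪ t ∈ M) ∧
    (∀ s ∈ M, ∀ t ∈ M, s ∩ t ∈ M) ∧
    (∀ s ∈ M, ∀ t ∈ M, s \ t ∈ M) ∧
    (∀ s ∈ M, ∀ x ∈ s, ({x} : Set U) ∈ M) ∧
    (¬ ∃ t ∈ M, ∀ s ∈ M, s ⊆ t) ∧
    (∀ s ∈ M, s.Nonempty → ∃ x ∈ s, ({x} : Set U) ∈ M ∧ ({x} : Set U) ⊆ s) := by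
  have hM' : M = finCofinLattice A {i | (i : ℕ) < n} (Fin.last n) := hM
  subst hM'
  exact ⟨fun _ hs _ ht => union_mem_finCofinLattice hs ht,
    fun _ hs _ ht => inter_mem_finCofinLattice hs ht,
    fun _ hs _ ht => diff_mem_finCofinLattice hs ht,
    fun _ hs _ hx => singleton_mem_finCofinLattice_of_mem hs hx,
    not_exists_top_finCofinLattice (hinf _),
    fun _ hs ⟨x, hx⟩ => ⟨x, hx, singleton_mem_finCofinLattice_of_mem hs hx,
      singleton_subset_iff.mpr hx⟩⟩

/-- The lattice `M` built from pairwise disjoint infinite sets `A 0, …, A n`: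
closed under union, intersection and difference, contains singletons of its members'
elements, is unbounded and atomic. -/
theorem stmt3 {U : Type*} (n : ℕ) (A : Fin (n + 1) → Set U)
    (hdisj : Pairwise (Function.onFun Disjoint A))
    (hinf : ∀ i, (A i).Infinite)
    (M : Set (Set U))
    (hM : M = {s | s ⊆ ⋃ i, A i ∧
      (∀ i : Fin (n + 1), (i : ℕ) < n → (s ∩ A i).Finite ∨ (A i \ s).Finite) ∧
      (s ∩ A (Fin.last n)).Finite}) :
    (∀ s ∈ M, ∀ t ∈ M, s ∪ t ∈ M) ∧
    (∀ s ∈ M, ∀ t ∈ M, s ∩ t ∈ M) ∧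
    (∀ s ∈ M, ∀ t ∈ M, s \ t ∈ M) ∧
    (∀ s ∈ M, ∀ x ∈ s, ({x} : Set U) ∈ M) ∧
    (¬ ∃ t ∈ M, ∀ s ∈ M, s ⊆ t) ∧
    (∀ s ∈ M, s.Nonempty → ∃ x ∈ s, ({x} : Set U) ∈ M ∧ ({x} : Set U) ⊆ s) :=
  stmt3_general n A hinf M hM
end

section
/- With M as in the construction from disjoint infinite sets A₀, …, A_{n-1}, A_n (where elements meet each A_i for i < n finitely or cofinitely and meet A_n finitely): M contains a family of n pairwise disjoint infinite elements, but every family of pairwise disjoint infinite elements of M has size at most n. -/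
/-!
The sets `A 0, …, A (n-1)` themselves are `n` pairwise disjoint infinite elements of `M`.
Conversely, an infinite element of `M` meets some `A i` in an infinite set; this cannot be
`A n`, so the element is cofinite in some `A i` with `i < n`. Two disjoint sets cannot both
be cofinite in the same infinite set, so a pairwise disjoint family of infinite elements
injects into `{0, …, n-1}`.
-/

open Set Function

section

variable {α ι : Type*}

theorem Set.Infinite.exists_infinite_inter_of_subset_iUnion [Finite ι] {s : Set α}
    {A : ι → Set α} (hs : s.Infinite) (hsub : s ⊆ ⋃ i, A i) :
    ∃ i, (s ∩ A i).Infinite := by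
  by_contra! hfin
  refine hs ((finite_iUnion hfin).subset fun x hx => ?_)
  obtain ⟨i, hxi⟩ := mem_iUnion.mp (hsub hx)
  exact mem_iUnion.mpr ⟨i, hx, hxi⟩

theorem Set.not_disjoint_of_diff_finite {B s t : Set α} (hB : B.Infinite)
    (hs : (B \ s).Finite) (ht : (B \ t).Finite) : ¬Disjoint s t := by
  intro hst
  refine hB ((hs.union ht).subset fun x hx => ?_)
  by_cases hxs : x ∈ s
  · exact Or.inr ⟨hx, disjoint_left.mp hst hxs⟩
  · exact Or.inl ⟨hx, hxs⟩

theorem Finset.card_le_of_pairwise_disjoint_of_diff_finite [Fintype ι] {B : ι → Set α}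
    (hB : ∀ i, (B i).Infinite) {F : Finset (Set α)} (hF : (F : Set (Set α)).Pairwise Disjoint)
    (hcof : ∀ s ∈ F, ∃ i, (B i \ s).Finite) : F.card ≤ Fintype.card ι := by
  choose g hg using fun s : F => hcof s s.2
  have hg_inj : Injective g := by
    intro s t hst
    by_contra hne
    exact not_disjoint_of_diff_finite (hB (g t)) (hst ▸ hg s) (hg t)
      (hF s.2 t.2 (Subtype.coe_injective.ne hne))
  simpa using Fintype.card_le_of_injective g hg_inj

theorem Pairwise.inter_finite_or_diff_finite {A : ι → Set α} (hA : Pairwise (Disjoint on A))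
    (i j : ι) : (A i ∩ A j).Finite ∨ (A j \ A i).Finite := by
  obtain rfl | hij := eq_or_ne i j
  · simp
  · simp [(hA hij).inter_eq]

theorem Pairwise.injective_of_disjoint {A : ι → Set α} (hA : Pairwise (Disjoint on A))
    (hne : ∀ i, (A i).Nonempty) : Injective A :=
  injective_iff_pairwise_ne.2 <| hA.mono fun i _ hd => hd.ne (hne i).ne_empty

end

theorem exists_castSucc_diff_finite {U : Type*} {n : ℕ} {A : Fin (n + 1) → Set U}
    {s : Set U} (hsub : s ⊆ ⋃ i, A i)
    (hcof : ∀ i : Fin (n + 1), (i : ℕ) < n → (s ∩ A i).Finite ∨ (A i \ s).Finite)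
    (hlast : (s ∩ A (Fin.last n)).Finite) (hs : s.Infinite) :
    ∃ i : Fin n, (A i.castSucc \ s).Finite := by
  obtain ⟨i, hi⟩ := hs.exists_infinite_inter_of_subset_iUnion hsub
  obtain ⟨j, rfl⟩ | rfl := Fin.eq_castSucc_or_eq_last i
  · exact ⟨j, (hcof j.castSucc j.is_lt).resolve_left hi⟩
  · exact absurd hlast hi

/-- The lattice `M` built from pairwise disjoint infinite sets `A 0, …, A n` contains a
family of `n` pairwise disjoint infinite elements, but no family of more than `n`
pairwise disjoint infinite elements. -/
theorem stmt4 {U : Type*} (n : ℕ) (A : Fin (n + 1) → Set U)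
    (hdisj : Pairwise (Function.onFun Disjoint A))
    (hinf : ∀ i, (A i).Infinite)
    (M : Set (Set U))
    (hM : M = {s | s ⊆ ⋃ i, A i ∧
      (∀ i : Fin (n + 1), (i : ℕ) < n → (s ∩ A i).Finite ∨ (A i \ s).Finite) ∧
      (s ∩ A (Fin.last n)).Finite}) :
    (∃ f : Fin n → Set U, Function.Injective f ∧
      (∀ i, f i ∈ M ∧ (f i).Infinite) ∧ Pairwise (Function.onFun Disjoint f)) ∧
    (∀ F : Finset (Set U), (∀ s ∈ F, s ∈ M ∧ s.Infinite) →
      (F : Set (Set U)).Pairwise Disjoint → F.card ≤ n) := by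
  have hdisj' : Pairwise (Disjoint on fun i : Fin n => A i.castSucc) :=
    hdisj.comp_of_injective (Fin.castSucc_injective n)
  have hmem : ∀ i : Fin n, A i.castSucc ∈ M := fun i => hM ▸
    ⟨subset_iUnion _ _, fun j _ => hdisj.inter_finite_or_diff_finite _ _,
      by simp [(hdisj (Fin.castSucc_lt_last i).ne).inter_eq]⟩
  refine ⟨⟨fun i => A i.castSucc, hdisj'.injective_of_disjoint fun i => (hinf _).nonempty,
    fun i => ⟨hmem i, hinf _⟩, hdisj'⟩, fun F hF hpair => ?_⟩
  have hcof : ∀ s ∈ F, ∃ i : Fin n, (A i.castSucc \ s).Finite := fun s hs => by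
    obtain ⟨hsM, hs⟩ := hF s hs
    obtain ⟨hsub, hcof, hlast⟩ := hM ▸ hsM
    exact exists_castSucc_diff_finite hsub hcof hlast hs
  simpa using Finset.card_le_of_pairwise_disjoint_of_diff_finite (fun _ => hinf _) hpair hcof
end

section
/- Let L be a countable atomic generalized Boolean algebra with no top element in which (i) every infinite element splits into two disjoint infinite elements and (ii) every element has an infinite element disjoint from it. Let L' be another structure with the same properties. Then any finite partial isomorphism between L and L' that preserves, for each cell of the Venn diagram of its domain, the cardinality of the set of atoms in that cell (as a specific natural number or both infinite), extends to an isomorphism L ≅ L'. -/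
/-- An element of a generalized Boolean algebra is *infinite* if it is not the join of
finitely many atoms. -/
def InfiniteElt {α : Type*} [GeneralizedBooleanAlgebra α] (u : α) : Prop :=
  ¬ ∃ F : Finset α, (∀ a ∈ F, IsAtom a) ∧ F.sup id = u

/-- `x` and `y` have the same number of atoms below them: either both sets of atoms are
infinite, or both are finite of the same size. -/
def SameAtomCount {α β : Type*} [GeneralizedBooleanAlgebra α] [GeneralizedBooleanAlgebra β]
    (x : α) (y : β) : Prop :=
  ({a : α | IsAtom a ∧ a ≤ x}.Finite ↔ {b : β | IsAtom b ∧ b ≤ y}.Finite) ∧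
  {a : α | IsAtom a ∧ a ≤ x}.ncard = {b : β | IsAtom b ∧ b ≤ y}.ncard

/-!
Every element of an atomic generalized Boolean algebra is determined by the atoms below it, so a
finite partial isomorphism amounts to a matching of the cells of its Venn diagram with disjoint
cells on the other side carrying the same number of atoms. Such a matching can be refined to
cover any new element `a`: each cell `c` is cut into `c ⊓ a` and `c \ a`, and its partner is cut
into two pieces with the same atom counts (finitely many atoms are carved out as a finite join of
atoms; when both pieces are infinite, property (i) splits the partner); the part of `a` outside all
cells is matched with an element disjoint from all partners, found inside an infinite element
given by property (ii). Alternating such refinements on both sides along enumerations of the two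
countable algebras builds the isomorphism.
-/

namespace BackAndForth

section OrderIso

variable {α β : Type*} [PartialOrder α] [PartialOrder β]

def IsPartialOrderIso (R : α → β → Prop) : Prop :=
  ∀ ⦃x x' : α⦄ ⦃y y' : β⦄, R x y → R x' y' → (x ≤ x' ↔ y ≤ y')

namespace IsPartialOrderIso

variable {R : α → β → Prop}

lemma right_unique (hR : IsPartialOrderIso R) {x : α} {y y' : β} (h : R x y) (h' : R x y') :
    y = y' :=
  le_antisymm ((hR h h').mp le_rfl) ((hR h' h).mp le_rfl)

lemma left_unique (hR : IsPartialOrderIso R) {x x' : α} {y : β} (h : R x y) (h' : R x' y) :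
    x = x' :=
  le_antisymm ((hR h h').mpr le_rfl) ((hR h' h).mpr le_rfl)

lemma exists_orderIso (hR : IsPartialOrderIso R) (hl : ∀ x, ∃ y, R x y)
    (hr : ∀ y, ∃ x, R x y) : ∃ g : α ≃o β, ∀ x, R x (g x) := by
  choose g hg using hl
  choose h hh using hr
  exact ⟨{ toFun := g
           invFun := h
           left_inv := fun x => hR.left_unique (hh (g x)) (hg x)
           right_inv := fun y => hR.right_unique (hg (h y)) (hh y)
           map_rel_iff' := fun {x x'} => (hR (hg x) (hg x')).symm }, hg⟩

end IsPartialOrderIso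

theorem exists_orderIso_of_backAndForth [Countable α] [Countable β] (P : Set (α → β → Prop))
    (hP : ∀ R ∈ P, IsPartialOrderIso R)
    (hforth : ∀ R ∈ P, ∀ a, ∃ R' ∈ P, R ≤ R' ∧ ∃ b, R' a b)
    (hback : ∀ R ∈ P, ∀ b, ∃ R' ∈ P, R ≤ R' ∧ ∃ a, R' a b)
    {R₀ : α → β → Prop} (h₀ : R₀ ∈ P) : ∃ g : α ≃o β, ∀ x y, R₀ x y → g x = y := by
  cases nonempty_encodable α
  cases nonempty_encodable β
  let 𝒟 : α ⊕ β → Order.Cofinal P := Sum.elim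
    (fun a => ⟨{R | ∃ b, R.1 a b}, fun R =>
      let ⟨R', hR', hle, hb⟩ := hforth R.1 R.2 a
      ⟨⟨R', hR'⟩, hb, hle⟩⟩)
    (fun b => ⟨{R | ∃ a, R.1 a b}, fun R =>
      let ⟨R', hR', hle, ha⟩ := hback R.1 R.2 b
      ⟨⟨R', hR'⟩, ha, hle⟩⟩)
  -- Rasiowa–Sikorski: a directed family of approximations defined at every point of either side
  let I := Order.idealOfCofinals ⟨R₀, h₀⟩ 𝒟
  let G : α → β → Prop := fun x y => ∃ R ∈ I, R.1 x y
  have hG : IsPartialOrderIso G := by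
    rintro x x' y y' ⟨R, hR, h⟩ ⟨R', hR', h'⟩
    obtain ⟨S, -, hRS, hR'S⟩ := I.directed R hR R' hR'
    exact hP S.1 S.2 (hRS x y h) (hR'S x' y' h')
  have hl : ∀ a, ∃ b, G a b := fun a => by
    obtain ⟨R, ⟨b, hb⟩, hRI⟩ := Order.cofinal_meets_idealOfCofinals ⟨R₀, h₀⟩ 𝒟 (.inl a)
    exact ⟨b, R, hRI, hb⟩
  have hr : ∀ b, ∃ a, G a b := fun b => by
    obtain ⟨R, ⟨a, ha⟩, hRI⟩ := Order.cofinal_meets_idealOfCofinals ⟨R₀, h₀⟩ 𝒟 (.inr b)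
    exact ⟨a, R, hRI, ha⟩
  obtain ⟨g, hg⟩ := hG.exists_orderIso hl hr
  exact ⟨g, fun x y h => hG.right_unique (hg x) ⟨_, Order.mem_idealOfCofinals _ _, h⟩⟩

end OrderIso

lemma _root_.IsAtom.supPrime {α : Type*} [DistribLattice α] [OrderBot α] {a : α} (ha : IsAtom a) :
    SupPrime a := by
  refine ⟨fun h => ha.1 h.eq_bot, fun {b c} hbc => ?_⟩
  by_contra! h
  rw [ha.not_le_iff_disjoint, ha.not_le_iff_disjoint] at h
  exact ha.1 ((h.1.sup_right h.2).eq_bot_of_le hbc)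

section AtomsBelow

variable {α : Type*} [GeneralizedBooleanAlgebra α]

def atomsBelow (x : α) : Set α := {a | IsAtom a ∧ a ≤ x}

lemma atomsBelow_sup (x y : α) : atomsBelow (x ⊔ y) = atomsBelow x ∪ atomsBelow y := by
  ext a
  simp only [atomsBelow, Set.mem_ofPred_eq, Set.mem_union]
  constructor
  · rintro ⟨ha, h⟩
    exact (ha.supPrime.le_sup.mp h).imp (⟨ha, ·⟩) (⟨ha, ·⟩)
  · rintro (⟨ha, h⟩ | ⟨ha, h⟩)
    exacts [⟨ha, h.trans le_sup_left⟩, ⟨ha, h.trans le_sup_right⟩]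

lemma disjoint_atomsBelow {x y : α} (h : Disjoint x y) :
    Disjoint (atomsBelow x) (atomsBelow y) :=
  Set.disjoint_left.mpr fun _ ⟨ha, hax⟩ ⟨_, hay⟩ => ha.1 (disjoint_self.mp (h.mono hax hay))

lemma encard_atomsBelow_sup {x y : α} (h : Disjoint x y) :
    (atomsBelow (x ⊔ y)).encard = (atomsBelow x).encard + (atomsBelow y).encard := by
  rw [atomsBelow_sup, Set.encard_union_eq (disjoint_atomsBelow h)]

lemma encard_atomsBelow_eq_add_sdiff {v x : α} (h : v ≤ x) :
    (atomsBelow x).encard = (atomsBelow v).encard + (atomsBelow (x \ v)).encard := by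
  rw [← encard_atomsBelow_sup disjoint_sdiff_self_right, sup_sdiff_cancel_right h]

lemma atomsBelow_finsetSup {Q : Finset α} (hQ : ∀ a ∈ Q, IsAtom a) :
    atomsBelow (Q.sup id) = Q := by
  ext a
  refine ⟨fun ⟨ha, h⟩ => ?_, fun h => ⟨hQ a h, Finset.le_sup (f := id) h⟩⟩
  obtain ⟨b, hb, hab⟩ := ha.supPrime.le_finset_sup.mp h
  exact ((hQ b hb).le_iff_eq ha.1).mp hab ▸ hb

lemma atomsBelow_eq_empty_iff [IsAtomic α] {x : α} : atomsBelow x = ∅ ↔ x = ⊥ := by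
  refine ⟨fun h => (eq_bot_or_exists_atom_le x).resolve_right fun ⟨a, ha, hax⟩ =>
    (h ▸ ⟨ha, hax⟩ : a ∈ (∅ : Set α)), ?_⟩
  rintro rfl
  exact Set.eq_empty_of_forall_notMem fun a ⟨ha, h⟩ => ha.1 (le_bot_iff.mp h)

lemma infiniteElt_iff [IsAtomic α] {x : α} : InfiniteElt x ↔ (atomsBelow x).Infinite := by
  refine ⟨fun h hfin => h ⟨hfin.toFinset, fun a ha => (hfin.mem_toFinset.mp ha).1, ?_⟩, ?_⟩
  · set s := hfin.toFinset.sup id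
    have hsx : s ≤ x := Finset.sup_le fun a ha => (hfin.mem_toFinset.mp ha).2
    refine le_antisymm hsx (sdiff_eq_bot_iff.mp (atomsBelow_eq_empty_iff.mp ?_))
    refine Set.eq_empty_of_forall_notMem fun a ⟨ha, h⟩ => ha.1 (disjoint_self.mp ?_)
    have has : a ≤ s := Finset.le_sup (f := id) (hfin.mem_toFinset.mpr ⟨ha, h.trans sdiff_le⟩)
    exact disjoint_sdiff_self_left.mono h has
  · rintro hinf ⟨F, hF, rfl⟩
    exact hinf (atomsBelow_finsetSup hF ▸ F.finite_toSet)

lemma exists_le_encard_atomsBelow_eq {y : α} {k : ℕ∞} (hk : k ≤ (atomsBelow y).encard)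
    (hk' : k ≠ ⊤) : ∃ q ≤ y, (atomsBelow q).encard = k := by
  obtain ⟨Q, hQy, hQ⟩ := Set.exists_subset_encard_eq hk
  lift Q to Finset α using Set.encard_ne_top_iff.mp (hQ ▸ hk')
  refine ⟨Q.sup id, Finset.sup_le fun a ha => (hQy ha).2, ?_⟩
  rw [atomsBelow_finsetSup fun a ha => (hQy ha).1, hQ]

end AtomsBelow

section SameAtomCount

variable {α β : Type*} [GeneralizedBooleanAlgebra α] [GeneralizedBooleanAlgebra β]

lemma sameAtomCount_iff_encard {x : α} {y : β} :
    SameAtomCount x y ↔ (atomsBelow x).encard = (atomsBelow y).encard := by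
  change ((atomsBelow x).Finite ↔ (atomsBelow y).Finite) ∧
    (atomsBelow x).ncard = (atomsBelow y).ncard ↔ _
  refine ⟨fun ⟨hfin, hcard⟩ => ?_, fun h => ⟨?_, ?_⟩⟩
  · by_cases hx : (atomsBelow x).Finite
    · rw [← hx.cast_ncard_eq, ← (hfin.mp hx).cast_ncard_eq, hcard]
    · rw [Set.encard_eq_top_iff.mpr hx, Set.encard_eq_top_iff.mpr (mt hfin.mpr hx)]
  · rw [← Set.encard_ne_top_iff, ← Set.encard_ne_top_iff, h]
  · rw [Set.ncard_def, Set.ncard_def, h]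

lemma _root_.SameAtomCount.symm {x : α} {y : β} (h : SameAtomCount x y) : SameAtomCount y x :=
  ⟨h.1.symm, h.2.symm⟩

lemma sameAtomCount_of_infinite {x : α} {y : β} (hx : (atomsBelow x).Infinite)
    (hy : (atomsBelow y).Infinite) : SameAtomCount x y :=
  sameAtomCount_iff_encard.mpr (by rw [hx.encard_eq, hy.encard_eq])

lemma _root_.SameAtomCount.eq_bot_iff [IsAtomic α] [IsAtomic β] {x : α} {y : β}
    (h : SameAtomCount x y) : x = ⊥ ↔ y = ⊥ := by
  rw [← atomsBelow_eq_empty_iff, ← atomsBelow_eq_empty_iff, ← Set.encard_eq_zero,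
    ← Set.encard_eq_zero, sameAtomCount_iff_encard.mp h]

lemma exists_sameAtomCount_split_of_finite {x v : α} {y : β} (hvx : v ≤ x)
    (hv : (atomsBelow v).Finite) (h : SameAtomCount x y) :
    ∃ q ≤ y, SameAtomCount v q ∧ SameAtomCount (x \ v) (y \ q) := by
  rw [sameAtomCount_iff_encard, encard_atomsBelow_eq_add_sdiff hvx] at h
  obtain ⟨q, hqy, hq⟩ := exists_le_encard_atomsBelow_eq (h ▸ le_self_add)
    (Set.encard_ne_top_iff.mpr hv)
  have hsum : (atomsBelow v).encard + (atomsBelow (x \ v)).encard =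
      (atomsBelow v).encard + (atomsBelow (y \ q)).encard := by
    rw [h, encard_atomsBelow_eq_add_sdiff hqy, hq]
  exact ⟨q, hqy, sameAtomCount_iff_encard.mpr hq.symm, sameAtomCount_iff_encard.mpr
    (WithTop.add_left_cancel (Set.encard_ne_top_iff.mpr hv) hsum)⟩

lemma exists_sameAtomCount_split [IsAtomic β]
    (hsplit : ∀ u : β, InfiniteElt u →
      ∃ v w : β, InfiniteElt v ∧ InfiniteElt w ∧ v ⊓ w = ⊥ ∧ v ⊔ w = u)
    {x v : α} {y : β} (hvx : v ≤ x) (h : SameAtomCount x y) :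
    ∃ q ≤ y, SameAtomCount v q ∧ SameAtomCount (x \ v) (y \ q) := by
  by_cases hv : (atomsBelow v).Finite
  · exact exists_sameAtomCount_split_of_finite hvx hv h
  by_cases hxv : (atomsBelow (x \ v)).Finite
  · -- carve out `x \ v` instead, and take the complement
    obtain ⟨q, hqy, h₁, h₂⟩ := exists_sameAtomCount_split_of_finite sdiff_le hxv h
    refine ⟨y \ q, sdiff_le, ?_, ?_⟩
    · rwa [sdiff_sdiff_right_self, inf_eq_right.mpr hvx] at h₂
    · rwa [sdiff_sdiff_right_self, inf_eq_right.mpr hqy]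
  have hy : InfiniteElt y := by
    rw [infiniteElt_iff, ← Set.encard_eq_top_iff, ← sameAtomCount_iff_encard.mp h,
      encard_atomsBelow_eq_add_sdiff hvx, Set.encard_eq_top_iff.mpr hv, top_add]
  obtain ⟨v', w', hv', hw', hvw, rfl⟩ := hsplit y hy
  refine ⟨v', le_sup_left, sameAtomCount_of_infinite hv (infiniteElt_iff.mp hv'), ?_⟩
  rw [(disjoint_iff.mpr hvw).sup_sdiff_cancel_left]
  exact sameAtomCount_of_infinite hxv (infiniteElt_iff.mp hw')

lemma exists_disjoint_sameAtomCount [IsAtomic β]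
    (hdisj : ∀ y : β, ∃ u : β, InfiniteElt u ∧ y ⊓ u = ⊥) (x : α) (y : β) :
    ∃ q, Disjoint q y ∧ SameAtomCount x q := by
  obtain ⟨u, hu, hyu⟩ := hdisj y
  have hu' := infiniteElt_iff.mp hu
  by_cases hx : (atomsBelow x).Finite
  · obtain ⟨q, hqu, hq⟩ := exists_le_encard_atomsBelow_eq (hu'.encard_eq ▸ le_top)
      (Set.encard_ne_top_iff.mpr hx)
    exact ⟨q, (disjoint_iff.mpr hyu).symm.mono_left hqu, sameAtomCount_iff_encard.mpr hq.symm⟩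
  · exact ⟨u, (disjoint_iff.mpr hyu).symm, sameAtomCount_of_infinite hx hu'⟩

end SameAtomCount

lemma sup_le_sup_iff_of_pairwiseDisjoint {ι γ : Type*} [DistribLattice γ] [OrderBot γ]
    {u : ι → γ} {M s t : Finset ι} (hu : (M : Set ι).PairwiseDisjoint u) (hs : s ⊆ M)
    (ht : t ⊆ M) : s.sup u ≤ t.sup u ↔ ∀ i ∈ s, i ∉ t → u i = ⊥ := by
  refine ⟨fun h i hi hit => ?_, fun h => Finset.sup_le fun i hi => ?_⟩
  · have hdisj : Disjoint (u i) (t.sup u) := Finset.disjoint_sup_right.mpr fun j hj =>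
      hu (hs hi) (ht hj) fun hij => hit (hij ▸ hj)
    exact hdisj.eq_bot_of_le ((Finset.le_sup hi).trans h)
  · by_cases hit : i ∈ t
    · exact Finset.le_sup hit
    · exact (h i hi hit).trans_le bot_le

lemma pairwiseDisjoint_biUnion {ι γ : Type*} [DecidableEq ι] [DistribLattice γ] [OrderBot γ]
    {u : ι → γ} {M : Finset ι} {N : ι → Finset ι} (hM : (M : Set ι).PairwiseDisjoint u)
    (hN : ∀ i ∈ M, (N i : Set ι).PairwiseDisjoint u) (hle : ∀ i ∈ M, ∀ j ∈ N i, u j ≤ u i) :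
    (M.biUnion N : Set ι).PairwiseDisjoint u := by
  rw [Finset.coe_biUnion]
  exact (hM.mono_on fun i hi => Finset.sup_le (hle i hi)).biUnion_finset hN

section CellMatching

variable {α β : Type*} [GeneralizedBooleanAlgebra α] [GeneralizedBooleanAlgebra β]

/-- Zero cells are allowed; in atomic algebras their partners are zero as well. -/
structure IsCellMatching (M : Finset (α × β)) : Prop where
  sameAtomCount : ∀ p ∈ M, SameAtomCount p.1 p.2
  pairwiseDisjoint_fst : (M : Set (α × β)).PairwiseDisjoint Prod.fst
  pairwiseDisjoint_snd : (M : Set (α × β)).PairwiseDisjoint Prod.snd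

/-- The partial map induced by a matching on the subalgebras generated by its cells. -/
def Matches (M : Finset (α × β)) (x : α) (y : β) : Prop :=
  ∃ s ⊆ M, s.sup Prod.fst = x ∧ s.sup Prod.snd = y

lemma isCellMatching_empty : IsCellMatching (∅ : Finset (α × β)) :=
  ⟨by simp, by simp, by simp⟩

lemma IsCellMatching.insert [DecidableEq α] [DecidableEq β] {M : Finset (α × β)}
    (hM : IsCellMatching M) {x : α} {y : β} (hx : Disjoint x (M.sup Prod.fst))
    (hy : Disjoint y (M.sup Prod.snd)) (h : SameAtomCount x y) :
    IsCellMatching (insert (x, y) M) where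
  sameAtomCount := Finset.forall_mem_insert _ _ _ |>.mpr ⟨h, hM.sameAtomCount⟩
  pairwiseDisjoint_fst := by
    rw [Finset.coe_insert, Set.pairwiseDisjoint_insert]
    exact ⟨hM.pairwiseDisjoint_fst, fun p hp _ => hx.mono_right (Finset.le_sup hp)⟩
  pairwiseDisjoint_snd := by
    rw [Finset.coe_insert, Set.pairwiseDisjoint_insert]
    exact ⟨hM.pairwiseDisjoint_snd, fun p hp _ => hy.mono_right (Finset.le_sup hp)⟩

lemma IsCellMatching.biUnion [DecidableEq α] [DecidableEq β] {M : Finset (α × β)}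
    {N : α × β → Finset (α × β)} (hM : IsCellMatching M) (hN : ∀ p ∈ M, IsCellMatching (N p))
    (hle : ∀ p ∈ M, ∀ r ∈ N p, r.1 ≤ p.1 ∧ r.2 ≤ p.2) : IsCellMatching (M.biUnion N) where
  sameAtomCount r hr := by
    obtain ⟨p, hp, hr⟩ := Finset.mem_biUnion.mp hr
    exact (hN p hp).sameAtomCount r hr
  pairwiseDisjoint_fst := pairwiseDisjoint_biUnion hM.pairwiseDisjoint_fst
    (fun p hp => (hN p hp).pairwiseDisjoint_fst) fun p hp r hr => (hle p hp r hr).1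
  pairwiseDisjoint_snd := pairwiseDisjoint_biUnion hM.pairwiseDisjoint_snd
    (fun p hp => (hN p hp).pairwiseDisjoint_snd) fun p hp r hr => (hle p hp r hr).2

lemma IsCellMatching.image_swap [DecidableEq α] [DecidableEq β] {M : Finset (α × β)}
    (hM : IsCellMatching M) : IsCellMatching (M.image Prod.swap) where
  sameAtomCount := Finset.forall_mem_image.mpr fun p hp => (hM.sameAtomCount p hp).symm
  pairwiseDisjoint_fst := by
    rw [Finset.coe_image, Prod.swap_injective.injOn.pairwiseDisjoint_image]
    exact hM.pairwiseDisjoint_snd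
  pairwiseDisjoint_snd := by
    rw [Finset.coe_image, Prod.swap_injective.injOn.pairwiseDisjoint_image]
    exact hM.pairwiseDisjoint_fst

lemma IsCellMatching.isPartialOrderIso [IsAtomic α] [IsAtomic β] {M : Finset (α × β)}
    (hM : IsCellMatching M) : IsPartialOrderIso (Matches M) := by
  rintro _ _ _ _ ⟨s, hs, rfl, rfl⟩ ⟨t, ht, rfl, rfl⟩
  rw [sup_le_sup_iff_of_pairwiseDisjoint hM.pairwiseDisjoint_fst hs ht,
    sup_le_sup_iff_of_pairwiseDisjoint hM.pairwiseDisjoint_snd hs ht]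
  exact forall₂_congr fun p hp =>
    imp_congr_right fun _ => (hM.sameAtomCount p (hs hp)).eq_bot_iff

lemma Matches.image_swap [DecidableEq α] [DecidableEq β] {M : Finset (α × β)} {x : α} {y : β}
    (h : Matches M x y) : Matches (M.image Prod.swap) y x := by
  obtain ⟨s, hs, rfl, rfl⟩ := h
  exact ⟨s.image Prod.swap, Finset.image_subset_image hs, by rw [Finset.sup_image]; rfl,
    by rw [Finset.sup_image]; rfl⟩

lemma matches_image_swap [DecidableEq α] [DecidableEq β] {M : Finset (α × β)} {x : α} {y : β} :
    Matches (M.image Prod.swap) y x ↔ Matches M x y := by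
  refine ⟨fun h => ?_, Matches.image_swap⟩
  simpa [Finset.image_image, Prod.swap_swap_eq] using h.image_swap

section Refine

variable [DecidableEq α] [DecidableEq β] (a : α) (q : α × β → β)

def splitPair (p : α × β) : Finset (α × β) := {(p.1 ⊓ a, q p), (p.1 \ a, p.2 \ q p)}

def refineBy (M : Finset (α × β)) (q₀ : β) : Finset (α × β) :=
  insert (a \ M.sup Prod.fst, q₀) (M.biUnion (splitPair a q))

variable {a q}

lemma sup_fst_splitPair (p : α × β) : (splitPair a q p).sup Prod.fst = p.1 := by
  simp [splitPair, sup_inf_sdiff]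

lemma sup_snd_splitPair {p : α × β} (hp : q p ≤ p.2) : (splitPair a q p).sup Prod.snd = p.2 := by
  simp [splitPair, sup_sdiff_cancel_right hp]

lemma isCellMatching_splitPair {p : α × β} (h₁ : SameAtomCount (p.1 ⊓ a) (q p))
    (h₂ : SameAtomCount (p.1 \ a) (p.2 \ q p)) :
    IsCellMatching (splitPair a q p) :=
  (isCellMatching_empty.insert (by simp) (by simp) h₂).insert
    (by simpa using disjoint_sdiff_self_right.mono_left inf_le_right)
    (by simpa using disjoint_sdiff_self_right) h₁

variable {M : Finset (α × β)} {q₀ : β}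

lemma isCellMatching_refineBy (hM : IsCellMatching M)
    (hq : ∀ p ∈ M, q p ≤ p.2 ∧ SameAtomCount (p.1 ⊓ a) (q p) ∧
      SameAtomCount (p.1 \ a) (p.2 \ q p))
    (hq₀ : Disjoint q₀ (M.sup Prod.snd)) (h₀ : SameAtomCount (a \ M.sup Prod.fst) q₀) :
    IsCellMatching (refineBy a q M q₀) := by
  have hN : IsCellMatching (M.biUnion (splitPair a q)) :=
    hM.biUnion (fun p hp => isCellMatching_splitPair (hq p hp).2.1 (hq p hp).2.2)
      fun p hp r hr => ⟨sup_fst_splitPair p ▸ Finset.le_sup hr,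
        sup_snd_splitPair (hq p hp).1 ▸ Finset.le_sup (f := Prod.snd) hr⟩
  refine hN.insert ?_ ?_ h₀
  · rw [Finset.sup_biUnion, Finset.sup_congr rfl fun p _ => sup_fst_splitPair p]
    exact disjoint_sdiff_self_left
  · rwa [Finset.sup_biUnion, Finset.sup_congr rfl fun p hp => sup_snd_splitPair (hq p hp).1]

lemma matches_le_matches_refineBy (hq : ∀ p ∈ M, q p ≤ p.2) :
    Matches M ≤ Matches (refineBy a q M q₀) := by
  rintro _ _ ⟨s, hs, rfl, rfl⟩
  refine ⟨s.biUnion (splitPair a q),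
    (Finset.biUnion_subset_biUnion_of_subset_left _ hs).trans (Finset.subset_insert _ _), ?_, ?_⟩
  · rw [Finset.sup_biUnion]
    exact Finset.sup_congr rfl fun p _ => sup_fst_splitPair p
  · rw [Finset.sup_biUnion]
    exact Finset.sup_congr rfl fun p hp => sup_snd_splitPair (hq p (hs hp))

lemma exists_matches_refineBy : ∃ y, Matches (refineBy a q M q₀) a y := by
  refine ⟨_, insert (a \ M.sup Prod.fst, q₀) (M.image fun p => (p.1 ⊓ a, q p)),
    Finset.insert_subset_insert _ fun r hr => ?_, ?_, rfl⟩
  · obtain ⟨p, hp, rfl⟩ := Finset.mem_image.mp hr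
    exact Finset.mem_biUnion.mpr ⟨p, hp, Finset.mem_insert_self _ _⟩
  · rw [Finset.sup_insert, Finset.sup_image]
    change a \ _ ⊔ M.sup (fun p => p.1 ⊓ a) = a
    rw [← Finset.sup_inf_distrib_right, inf_comm, sup_comm, sup_inf_sdiff]

end Refine

theorem IsCellMatching.exists_forth [IsAtomic β]
    (hsplit : ∀ u : β, InfiniteElt u →
      ∃ v w : β, InfiniteElt v ∧ InfiniteElt w ∧ v ⊓ w = ⊥ ∧ v ⊔ w = u)
    (hdisj : ∀ y : β, ∃ u : β, InfiniteElt u ∧ y ⊓ u = ⊥) {M : Finset (α × β)}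
    (hM : IsCellMatching M) (a : α) :
    ∃ M', IsCellMatching M' ∧ Matches M ≤ Matches M' ∧ ∃ y, Matches M' a y := by
  classical
  have hsplitM : ∀ p ∈ M, ∃ q ≤ p.2, SameAtomCount (p.1 ⊓ a) q ∧
      SameAtomCount (p.1 \ a) (p.2 \ q) := fun p hp => by
    simpa only [sdiff_inf_self_left] using
      exists_sameAtomCount_split hsplit inf_le_left (hM.sameAtomCount p hp)
  choose! q hq using hsplitM
  obtain ⟨q₀, hq₀, h₀⟩ :=
    exists_disjoint_sameAtomCount hdisj (a \ M.sup Prod.fst) (M.sup Prod.snd)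
  exact ⟨refineBy a q M q₀, isCellMatching_refineBy hM hq hq₀ h₀,
    matches_le_matches_refineBy fun p hp => (hq p hp).1, exists_matches_refineBy⟩

theorem IsCellMatching.exists_back [IsAtomic α]
    (hsplit : ∀ u : α, InfiniteElt u →
      ∃ v w : α, InfiniteElt v ∧ InfiniteElt w ∧ v ⊓ w = ⊥ ∧ v ⊔ w = u)
    (hdisj : ∀ x : α, ∃ u : α, InfiniteElt u ∧ x ⊓ u = ⊥) {M : Finset (α × β)}
    (hM : IsCellMatching M) (b : β) :
    ∃ M', IsCellMatching M' ∧ Matches M ≤ Matches M' ∧ ∃ x, Matches M' x b := by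
  classical
  obtain ⟨N, hN, hle, x, hx⟩ := hM.image_swap.exists_forth hsplit hdisj b
  exact ⟨N.image Prod.swap, hN.image_swap,
    fun x y h => matches_image_swap.mpr (hle y x h.image_swap), x, matches_image_swap.mpr hx⟩

end CellMatching

theorem IsCellMatching.exists_orderIso {α β : Type*} [GeneralizedBooleanAlgebra α]
    [GeneralizedBooleanAlgebra β] [Countable α] [Countable β] [IsAtomic α] [IsAtomic β]
    (hsplitα : ∀ u : α, InfiniteElt u →
      ∃ v w : α, InfiniteElt v ∧ InfiniteElt w ∧ v ⊓ w = ⊥ ∧ v ⊔ w = u)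
    (hsplitβ : ∀ u : β, InfiniteElt u →
      ∃ v w : β, InfiniteElt v ∧ InfiniteElt w ∧ v ⊓ w = ⊥ ∧ v ⊔ w = u)
    (hdisjα : ∀ x : α, ∃ u : α, InfiniteElt u ∧ x ⊓ u = ⊥)
    (hdisjβ : ∀ x : β, ∃ u : β, InfiniteElt u ∧ x ⊓ u = ⊥) {M : Finset (α × β)}
    (hM : IsCellMatching M) : ∃ g : α ≃o β, ∀ x y, Matches M x y → g x = y := by
  refine exists_orderIso_of_backAndForth {R | ∃ M, IsCellMatching M ∧ Matches M = R}
    ?_ ?_ ?_ ⟨M, hM, rfl⟩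
  · rintro _ ⟨M, hM, rfl⟩
    exact hM.isPartialOrderIso
  · rintro _ ⟨M, hM, rfl⟩ a
    obtain ⟨M', hM', hle, hy⟩ := hM.exists_forth hsplitβ hdisjβ a
    exact ⟨_, ⟨M', hM', rfl⟩, hle, hy⟩
  · rintro _ ⟨M, hM, rfl⟩ b
    obtain ⟨M', hM', hle, hx⟩ := hM.exists_back hsplitα hdisjα b
    exact ⟨_, ⟨M', hM', rfl⟩, hle, hx⟩

section PartialHom

variable {α β : Type*} [GeneralizedBooleanAlgebra α] [GeneralizedBooleanAlgebra β]

structure IsPartialHom (S : Finset α) (f : α → β) : Prop where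
  bot_mem : ⊥ ∈ S
  sup_mem : ∀ x ∈ S, ∀ y ∈ S, x ⊔ y ∈ S
  inf_mem : ∀ x ∈ S, ∀ y ∈ S, x ⊓ y ∈ S
  sdiff_mem : ∀ x ∈ S, ∀ y ∈ S, x \ y ∈ S
  map_sup : ∀ x ∈ S, ∀ y ∈ S, f (x ⊔ y) = f x ⊔ f y
  map_inf : ∀ x ∈ S, ∀ y ∈ S, f (x ⊓ y) = f x ⊓ f y
  map_sdiff : ∀ x ∈ S, ∀ y ∈ S, f (x \ y) = f x \ f y

namespace IsPartialHom

variable {S : Finset α} {f : α → β}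

lemma map_bot (hf : IsPartialHom S f) : f ⊥ = ⊥ := by
  simpa using hf.map_sdiff ⊥ hf.bot_mem ⊥ hf.bot_mem

lemma mem_and_map_eq_of_matches (hf : IsPartialHom S f) {M : Finset (α × β)}
    (hM : ∀ p ∈ M, p.1 ∈ S ∧ f p.1 = p.2) {x : α} {y : β} (h : Matches M x y) :
    x ∈ S ∧ f x = y := by
  obtain ⟨s, hs, rfl, rfl⟩ := h
  induction s using Finset.cons_induction with
  | empty => exact ⟨hf.bot_mem, hf.map_bot⟩
  | cons p s hps ih =>
    obtain ⟨hsS, hsf⟩ := ih ((Finset.subset_cons _).trans hs)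
    obtain ⟨hpS, hpf⟩ := hM p (hs (Finset.mem_cons_self _ _))
    rw [Finset.sup_cons, Finset.sup_cons]
    exact ⟨hf.sup_mem _ hpS _ hsS, by rw [hf.map_sup _ hpS _ hsS, hpf, hsf]⟩

lemma exists_refineBy [DecidableEq α] [DecidableEq β] (hf : IsPartialHom S f)
    (hcells : ∀ x ∈ S, SameAtomCount x (f x)) {M : Finset (α × β)} (hM : IsCellMatching M)
    (hMf : ∀ p ∈ M, p.1 ∈ S ∧ f p.1 = p.2) {a : α} (ha : a ∈ S) :
    ∃ M', IsCellMatching M' ∧ (∀ p ∈ M', p.1 ∈ S ∧ f p.1 = p.2) ∧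
      Matches M ≤ Matches M' ∧ Matches M' a (f a) := by
  set m := M.sup Prod.fst
  obtain ⟨hm, hfm⟩ := hf.mem_and_map_eq_of_matches hMf ⟨M, subset_rfl, rfl, rfl⟩
  have ham := hf.sdiff_mem a ha m hm
  -- cut each partner `f c` by `f a`, and send the new part `a \ m` of `a` to `f (a \ m)`
  set M' := refineBy a (fun p => p.2 ⊓ f a) M (f (a \ m))
  have hM'f : ∀ p ∈ M', p.1 ∈ S ∧ f p.1 = p.2 := by
    simp only [M', refineBy, splitPair, Finset.mem_insert, Finset.mem_biUnion,
      Finset.mem_singleton]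
    rintro _ (rfl | ⟨p, hp, hr⟩)
    · exact ⟨ham, rfl⟩
    obtain ⟨hpS, hpf⟩ := hMf p hp
    rcases hr with rfl | rfl
    · exact ⟨hf.inf_mem _ hpS _ ha, by rw [hf.map_inf _ hpS _ ha, hpf]⟩
    · exact ⟨hf.sdiff_mem _ hpS _ ha, by rw [hf.map_sdiff _ hpS _ ha, hpf, sdiff_inf_self_left]⟩
  have hM' : IsCellMatching M' := by
    refine isCellMatching_refineBy hM (fun p hp => ?_) ?_ (hcells _ ham)
    · obtain ⟨hpS, hpf⟩ := hMf p hp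
      refine ⟨inf_le_left, ?_, ?_⟩
      · rw [← hpf, ← hf.map_inf _ hpS _ ha]
        exact hcells _ (hf.inf_mem _ hpS _ ha)
      · rw [← hpf, sdiff_inf_self_left, ← hf.map_sdiff _ hpS _ ha]
        exact hcells _ (hf.sdiff_mem _ hpS _ ha)
    · rw [← hfm, disjoint_iff, ← hf.map_inf _ ham _ hm, disjoint_sdiff_self_left.eq_bot,
        hf.map_bot]
  obtain ⟨y, hy⟩ : ∃ y, Matches M' a y := exists_matches_refineBy
  exact ⟨M', hM', hM'f, matches_le_matches_refineBy fun p _ => inf_le_left,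
    (hf.mem_and_map_eq_of_matches hM'f hy).2 ▸ hy⟩

lemma exists_isCellMatching (hf : IsPartialHom S f) (hcells : ∀ x ∈ S, SameAtomCount x (f x)) :
    ∃ M : Finset (α × β), IsCellMatching M ∧ ∀ x ∈ S, Matches M x (f x) := by
  classical
  suffices ∀ T ⊆ S, ∃ M : Finset (α × β), IsCellMatching M ∧
      (∀ p ∈ M, p.1 ∈ S ∧ f p.1 = p.2) ∧ ∀ x ∈ T, Matches M x (f x) from
    (this S subset_rfl).imp fun _ hM => ⟨hM.1, hM.2.2⟩
  intro T hT
  induction T using Finset.induction_on with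
  | empty => exact ⟨∅, isCellMatching_empty, by simp, by simp⟩
  | insert a T _ ih =>
    obtain ⟨M, hM, hMf, hMT⟩ := ih ((Finset.subset_insert _ _).trans hT)
    obtain ⟨M', hM', hM'f, hle, ha⟩ :=
      hf.exists_refineBy hcells hM hMf (hT (Finset.mem_insert_self _ _))
    exact ⟨M', hM', hM'f, Finset.forall_mem_insert _ _ _ |>.mpr
      ⟨ha, fun x hx => hle _ _ (hMT x hx)⟩⟩

end IsPartialHom

end PartialHom

end BackAndForth

theorem stmt11_general {α β : Type*} [GeneralizedBooleanAlgebra α] [GeneralizedBooleanAlgebra β]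
    [Countable α] [Countable β] [IsAtomic α] [IsAtomic β]
    (hsplitα : ∀ u : α, InfiniteElt u →
      ∃ v w : α, InfiniteElt v ∧ InfiniteElt w ∧ v ⊓ w = ⊥ ∧ v ⊔ w = u)
    (hsplitβ : ∀ u : β, InfiniteElt u →
      ∃ v w : β, InfiniteElt v ∧ InfiniteElt w ∧ v ⊓ w = ⊥ ∧ v ⊔ w = u)
    (hdisjα : ∀ x : α, ∃ u : α, InfiniteElt u ∧ x ⊓ u = ⊥)
    (hdisjβ : ∀ x : β, ∃ u : β, InfiniteElt u ∧ x ⊓ u = ⊥)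
    (S : Finset α) (f : α → β)
    (hbot : (⊥ : α) ∈ S)
    (hsupS : ∀ x ∈ S, ∀ y ∈ S, x ⊔ y ∈ S)
    (hinfS : ∀ x ∈ S, ∀ y ∈ S, x ⊓ y ∈ S)
    (hsdiffS : ∀ x ∈ S, ∀ y ∈ S, x \ y ∈ S)
    (hfsup : ∀ x ∈ S, ∀ y ∈ S, f (x ⊔ y) = f x ⊔ f y)
    (hfinf : ∀ x ∈ S, ∀ y ∈ S, f (x ⊓ y) = f x ⊓ f y)
    (hfsdiff : ∀ x ∈ S, ∀ y ∈ S, f (x \ y) = f x \ f y)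
    (hcells : ∀ x ∈ S, SameAtomCount x (f x)) :
    ∃ g : α ≃o β, ∀ x ∈ S, g x = f x := by
  have hf : BackAndForth.IsPartialHom S f := ⟨hbot, hsupS, hinfS, hsdiffS, hfsup, hfinf, hfsdiff⟩
  obtain ⟨M, hM, hSM⟩ := hf.exists_isCellMatching hcells
  obtain ⟨g, hg⟩ := hM.exists_orderIso hsplitα hsplitβ hdisjα hdisjβ
  exact ⟨g, fun x hx => hg x (f x) (hSM x hx)⟩

/-- Back-and-forth: in countable atomic generalized Boolean algebras without top,
satisfying the two splitting/unboundedness properties, every finite partial isomorphism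
whose domain is closed under the lattice operations and which preserves the
atom-cardinality of each cell of the Venn diagram of its domain extends to a full
isomorphism. -/
theorem stmt11 {α β : Type*} [GeneralizedBooleanAlgebra α] [GeneralizedBooleanAlgebra β]
    [Countable α] [Countable β] [IsAtomic α] [IsAtomic β]
    (htopα : ¬ ∃ t : α, ∀ x : α, x ≤ t) (htopβ : ¬ ∃ t : β, ∀ x : β, x ≤ t)
    (hsplitα : ∀ u : α, InfiniteElt u →
      ∃ v w : α, InfiniteElt v ∧ InfiniteElt w ∧ v ⊓ w = ⊥ ∧ v ⊔ w = u)
    (hsplitβ : ∀ u : β, InfiniteElt u →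
      ∃ v w : β, InfiniteElt v ∧ InfiniteElt w ∧ v ⊓ w = ⊥ ∧ v ⊔ w = u)
    (hdisjα : ∀ x : α, ∃ u : α, InfiniteElt u ∧ x ⊓ u = ⊥)
    (hdisjβ : ∀ x : β, ∃ u : β, InfiniteElt u ∧ x ⊓ u = ⊥)
    (S : Finset α) (f : α → β)
    (hbot : (⊥ : α) ∈ S)
    (hsupS : ∀ x ∈ S, ∀ y ∈ S, x ⊔ y ∈ S)
    (hinfS : ∀ x ∈ S, ∀ y ∈ S, x ⊓ y ∈ S)
    (hsdiffS : ∀ x ∈ S, ∀ y ∈ S, x \ y ∈ S)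
    (hord : ∀ x ∈ S, ∀ y ∈ S, x ≤ y ↔ f x ≤ f y)
    (hfsup : ∀ x ∈ S, ∀ y ∈ S, f (x ⊔ y) = f x ⊔ f y)
    (hfinf : ∀ x ∈ S, ∀ y ∈ S, f (x ⊓ y) = f x ⊓ f y)
    (hfsdiff : ∀ x ∈ S, ∀ y ∈ S, f (x \ y) = f x \ f y)
    (hcells : ∀ x ∈ S, SameAtomCount x (f x)) :
    ∃ g : α ≃o β, ∀ x ∈ S, g x = f x :=
  stmt11_general hsplitα hsplitβ hdisjα hdisjβ S f hbot hsupS hinfS hsdiffS hfsup hfinf hfsdiff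
    hcells
end

section
/- If a countable first-order structure M is ω-saturated, then any two countable ω-saturated models of the same complete theory are isomorphic (uniqueness of the countable ω-saturated model). -/
/-!
Back and forth through finite partial maps preserving all formulas. Such a map from `M` extends
to any new `x : M`: by ω-saturation of `N` it suffices that the type of `x` over the domain be
finitely satisfiable over the image, and each finite part of it, quantified existentially, is a
formula true of the domain, hence of the image. Enumerating the countable structures `M` and `N`
gives a chain of such maps, starting from the empty map (elementary since `M ≡ N`), whose union
is defined everywhere and onto; it preserves equality, functions and relations, so it is an
isomorphism.
-/

open FirstOrder

/-- A structure is ω-saturated if every type over finitely many parameters that is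
finitely realized in the structure is realized in the structure. -/
def OmegaSaturated (L : FirstOrder.Language) (M : Type*) [L.Structure M] : Prop :=
  ∀ (n : ℕ) (v : Fin n → M) (T : Set (L.Formula (Fin n ⊕ Fin 1))),
    (∀ T₀ : Finset (L.Formula (Fin n ⊕ Fin 1)), ↑T₀ ⊆ T →
      ∃ x : M, ∀ φ ∈ T₀, φ.Realize (Sum.elim v (fun _ => x))) →
    ∃ x : M, ∀ φ ∈ T, φ.Realize (Sum.elim v (fun _ => x))

open Language

namespace FirstOrder.Language

variable {L : Language} {M N : Type*} [L.Structure M] [L.Structure N]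

def SameType (L : Language) {α : Type*} [L.Structure M] [L.Structure N]
    (a : α → M) (b : α → N) : Prop :=
  ∀ φ : L.Formula α, φ.Realize a ↔ φ.Realize b

namespace SameType

variable {α β : Type*} {a : α → M} {b : α → N}

theorem symm (h : L.SameType a b) : L.SameType b a := fun φ => (h φ).symm

theorem comp (h : L.SameType a b) (g : β → α) : L.SameType (a ∘ g) (b ∘ g) := fun φ => by
  simpa only [Formula.realize_relabel] using h (φ.relabel g)

theorem of_isEmpty [IsEmpty α] (hMN : L.ElementarilyEquivalent M N) :
    L.SameType a b := fun φ => by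
  have h := elementarilyEquivalent_iff.1 hMN (φ.relabel isEmptyElim)
  simp only [Sentence.Realize, Formula.realize_relabel] at h
  rwa [Subsingleton.elim (default ∘ isEmptyElim) a,
    Subsingleton.elim (default ∘ isEmptyElim) b] at h

theorem eq_iff (h : L.SameType a b) (i j : α) : a i = a j ↔ b i = b j := by
  simpa using h ((Term.var i).equal (Term.var j))

theorem funMap_eq_iff (h : L.SameType a b) {l : ℕ} (f : L.Functions l) (g : Fin l → α)
    (i : α) : Structure.funMap f (a ∘ g) = a i ↔ Structure.funMap f (b ∘ g) = b i := by
  simpa [Function.comp_def] using h ((Term.func f (Term.var ∘ g)).equal (Term.var i))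

theorem relMap_iff (h : L.SameType a b) {l : ℕ} (r : L.Relations l) (g : Fin l → α) :
    Structure.RelMap r (a ∘ g) ↔ Structure.RelMap r (b ∘ g) := by
  simpa [Function.comp_def] using h (r.formula (Term.var ∘ g))

end SameType

end FirstOrder.Language

namespace OmegaSaturated

variable {L : Language} {M N : Type*} [L.Structure M] [L.Structure N]

theorem exists_sameType_sumElim_fin (hN : OmegaSaturated L N) {n : ℕ} {a : Fin n → M}
    {b : Fin n → N} (h : L.SameType a b) (x : M) :
    ∃ y : N, L.SameType (Sum.elim a fun _ : Fin 1 => x) (Sum.elim b fun _ => y) := by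
  set p : Set (L.Formula (Fin n ⊕ Fin 1)) := {φ | φ.Realize (Sum.elim a fun _ => x)}
  have hfin : ∀ p₀ : Finset (L.Formula (Fin n ⊕ Fin 1)), ↑p₀ ⊆ p →
      ∃ y : N, ∀ φ ∈ p₀, φ.Realize (Sum.elim b fun _ => y) := by
    intro p₀ hp₀
    let ψ : L.Formula (Fin n ⊕ Fin 1) := BoundedFormula.iInf fun φ : p₀ => φ.1
    have hψ : (ψ.iExs (Fin 1)).Realize a :=
      Formula.realize_iExs.2 ⟨fun _ => x, BoundedFormula.realize_iInf.2 fun φ => hp₀ φ.2⟩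
    obtain ⟨c, hc⟩ := Formula.realize_iExs.1 ((h _).1 hψ)
    have hc0 : c = fun _ => c 0 := funext fun i => congrArg c (Subsingleton.elim i 0)
    rw [hc0] at hc
    exact ⟨c 0, fun φ hφ => BoundedFormula.realize_iInf.1 hc ⟨φ, hφ⟩⟩
  obtain ⟨y, hy⟩ := hN n b p hfin
  refine ⟨y, fun φ => ⟨hy φ, fun hφ => ?_⟩⟩
  by_contra hnot
  exact (Formula.realize_not.1 (hy φ.not (Formula.realize_not.2 hnot))) hφ

theorem exists_sameType_sumElim (hN : OmegaSaturated L N) {α : Type*} [Finite α]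
    {a : α → M} {b : α → N} (h : L.SameType a b) (x : M) :
    ∃ y : N, L.SameType (Sum.elim a fun _ : Fin 1 => x) (Sum.elim b fun _ => y) := by
  let e := Finite.equivFin α
  obtain ⟨y, hy⟩ := hN.exists_sameType_sumElim_fin (h.comp e.symm) x
  refine ⟨y, ?_⟩
  simpa [Sum.elim_comp_map, Function.comp_assoc] using hy.comp (Sum.map e id)

end OmegaSaturated

namespace FirstOrder.Language

variable {L : Language} {M N : Type*} [L.Structure M] [L.Structure N]

/-- Such an `s` is necessarily the graph of an injective partial map from `M` to `N`. -/
def IsPartialElementary (L : Language) [L.Structure M] [L.Structure N] (s : Set (M × N)) :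
    Prop :=
  L.SameType (fun p : s => p.1.1) (fun p : s => p.1.2)

theorem isPartialElementary_insert {s : Set (M × N)} {x : M} {y : N}
    (h : L.SameType (Sum.elim (fun p : s => p.1.1) fun _ : Fin 1 => x)
      (Sum.elim (fun p : s => p.1.2) fun _ : Fin 1 => y)) :
    L.IsPartialElementary (insert (x, y) s) := by
  classical
  let g : ↥(insert (x, y) s) → s ⊕ Fin 1 := fun q =>
    if hq : q.1 ∈ s then .inl ⟨q.1, hq⟩ else .inr 0
  show L.SameType _ _
  convert h.comp g using 1 <;> funext ⟨q, hq⟩ <;> obtain rfl | hqs := hq <;>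
    simp only [g, Function.comp_apply] <;> split_ifs <;> simp_all

namespace IsPartialElementary

variable {s : Set (M × N)}

theorem mono {t : Set (M × N)} (ht : L.IsPartialElementary t) (hst : s ⊆ t) :
    L.IsPartialElementary s :=
  ht.comp (Set.inclusion hst)

theorem forth (hN : OmegaSaturated L N) (hs : s.Finite) (h : L.IsPartialElementary s)
    (x : M) : ∃ y, L.IsPartialElementary (insert (x, y) s) :=
  have := hs.to_subtype
  (hN.exists_sameType_sumElim h x).imp fun _ => isPartialElementary_insert

theorem back (hM : OmegaSaturated L M) (hs : s.Finite) (h : L.IsPartialElementary s)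
    (y : N) : ∃ x, L.IsPartialElementary (insert (x, y) s) :=
  have := hs.to_subtype
  (hM.exists_sameType_sumElim h.symm y).imp fun _ hx => isPartialElementary_insert hx.symm

end IsPartialElementary

section Limit

variable {R : Set (M × N)}

theorem sameType_of_forall_mem (hR : ∀ s ⊆ R, s.Finite → L.IsPartialElementary s)
    {β : Type*} [Finite β] (a : β → M) (b : β → N) (hab : ∀ i, (a i, b i) ∈ R) :
    L.SameType a b :=
  (hR _ (Set.range_subset_iff.2 hab) (Set.finite_range _)).comp
    (Set.rangeFactorization fun i => (a i, b i))

theorem eq_iff_eq_of_mem (hR : ∀ s ⊆ R, s.Finite → L.IsPartialElementary s) {x₁ x₂ : M}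
    {y₁ y₂ : N} (h₁ : (x₁, y₁) ∈ R) (h₂ : (x₂, y₂) ∈ R) : x₁ = x₂ ↔ y₁ = y₂ :=
  (sameType_of_forall_mem hR ![x₁, x₂] ![y₁, y₂] (by simp [Fin.forall_fin_two, h₁, h₂])).eq_iff
    0 1

theorem nonempty_equiv_of_forall_finite_isPartialElementary
    (hR : ∀ s ⊆ R, s.Finite → L.IsPartialElementary s) (hdom : ∀ x, ∃ y, (x, y) ∈ R)
    (hcod : ∀ y, ∃ x, (x, y) ∈ R) : Nonempty (M ≃[L] N) := by
  choose F hF using hdom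
  choose G hG using hcod
  refine ⟨{
    toFun := F
    invFun := G
    left_inv := fun x => (eq_iff_eq_of_mem hR (hG (F x)) (hF x)).2 rfl
    right_inv := fun y => (eq_iff_eq_of_mem hR (hF (G y)) (hG y)).1 rfl
    map_fun' := fun {l} f xs => ?_
    map_rel' := fun {l} r xs => ?_ }⟩
  · have h := sameType_of_forall_mem hR (Fin.cons (Structure.funMap f xs) xs : Fin (l + 1) → M)
      (Fin.cons (F (Structure.funMap f xs)) (F ∘ xs)) (Fin.cases (hF _) fun i => hF (xs i))
    exact ((h.funMap_eq_iff f Fin.succ 0).1 (by simp)).symm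
  · exact ((sameType_of_forall_mem hR xs (F ∘ xs) fun i => hF (xs i)).relMap_iff r id).symm

end Limit

variable (L M N) in
abbrev FinitePartialElementary : Type _ :=
  {s : Set (M × N) // s.Finite ∧ L.IsPartialElementary s}

namespace FinitePartialElementary

def definedAtLeft (hN : OmegaSaturated L N) (x : M) :
    Order.Cofinal (L.FinitePartialElementary M N) where
  carrier := {s | ∃ y, (x, y) ∈ s.1}
  isCofinal s :=
    have ⟨y, hy⟩ := s.2.2.forth hN s.2.1 x
    ⟨⟨_, s.2.1.insert _, hy⟩, ⟨y, Set.mem_insert _ _⟩, Set.subset_insert _ _⟩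

def definedAtRight (hM : OmegaSaturated L M) (y : N) :
    Order.Cofinal (L.FinitePartialElementary M N) where
  carrier := {s | ∃ x, (x, y) ∈ s.1}
  isCofinal s :=
    have ⟨x, hx⟩ := s.2.2.back hM s.2.1 y
    ⟨⟨_, s.2.1.insert _, hx⟩, ⟨x, Set.mem_insert _ _⟩, Set.subset_insert _ _⟩

end FinitePartialElementary

open FinitePartialElementary in
theorem exists_forall_finite_isPartialElementary [Countable M] [Countable N]
    (hMN : L.ElementarilyEquivalent M N) (hM : OmegaSaturated L M) (hN : OmegaSaturated L N) :
    ∃ R : Set (M × N), (∀ s ⊆ R, s.Finite → L.IsPartialElementary s) ∧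
      (∀ x, ∃ y, (x, y) ∈ R) ∧ ∀ y, ∃ x, (x, y) ∈ R := by
  have := Encodable.ofCountable M
  have := Encodable.ofCountable N
  let D : M ⊕ N → Order.Cofinal (L.FinitePartialElementary M N) :=
    Sum.elim (definedAtLeft hN) (definedAtRight hM)
  let S := Order.sequenceOfCofinals ⟨∅, Set.finite_empty, SameType.of_isEmpty hMN⟩ D
  have hS : Directed (· ⊆ ·) fun n => (S n).1 :=
    (Order.sequenceOfCofinals.monotone _ D).directed_le.mono_comp _ fun _ _ h => h
  refine ⟨⋃ n, (S n).1, fun s hsR hs => ?_, fun x => ?_, fun y => ?_⟩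
  · obtain ⟨n, hn⟩ := hS.exists_mem_subset_of_finset_subset_biUnion (s := hs.toFinset)
      (by simpa using hsR)
    exact (S n).2.2.mono (by simpa using hn)
  · obtain ⟨y, hy⟩ := Order.sequenceOfCofinals.encode_mem _ D (.inl x)
    exact ⟨y, Set.mem_iUnion_of_mem _ hy⟩
  · obtain ⟨x, hx⟩ := Order.sequenceOfCofinals.encode_mem _ D (.inr y)
    exact ⟨x, Set.mem_iUnion_of_mem _ hx⟩

end FirstOrder.Language

theorem stmt18_general (L : FirstOrder.Language)
    (M N : Type*) [L.Structure M] [L.Structure N] [Countable M] [Countable N]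
    (hMN : L.ElementarilyEquivalent M N)
    (hM : OmegaSaturated L M) (hN : OmegaSaturated L N) :
    Nonempty (M ≃[L] N) :=
  have ⟨_, hR, hdom, hcod⟩ := exists_forall_finite_isPartialElementary hMN hM hN
  nonempty_equiv_of_forall_finite_isPartialElementary hR hdom hcod

/-- Uniqueness of the countable ω-saturated model: two countable, elementarily
equivalent, ω-saturated structures in a countable language are isomorphic. -/
theorem stmt18 (L : FirstOrder.Language) [Countable L.Symbols]
    (M N : Type*) [L.Structure M] [L.Structure N] [Countable M] [Countable N]
    (hMN : L.ElementarilyEquivalent M N)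
    (hM : OmegaSaturated L M) (hN : OmegaSaturated L N) :
    Nonempty (M ≃[L] N) :=
  stmt18_general L M N hMN hM hN
end

section
/- Two unbounded atomic generalized Boolean algebras with no maximal element, in each of which every infinite element splits into two disjoint infinite parts and every element is disjoint from some infinite element, satisfy: for any tuple assignments with matching cell-cardinality invariants (each Venn cell having the same finite number of atoms, or both infinite), the tuples can be extended by one more element on either side preserving the invariants (the back-and-forth extension lemma). -/
/-- The Venn-diagram cell of a tuple `a` determined by a nonempty set `S` of indices:
the meet of the `a i` for `i ∈ S` minus the join of the remaining `a i`. -/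
def vennCell {α : Type*} [GeneralizedBooleanAlgebra α] {n : ℕ} (a : Fin n → α)
    (S : Finset (Fin n)) (hS : S.Nonempty) : α :=
  (S.inf' hS a) \ (Sᶜ.sup a)

/-- Two tuples have matching invariants when corresponding Venn cells have the same
number of atoms (a common finite number, or both infinite). -/
def MatchingInvariants {α β : Type*} [GeneralizedBooleanAlgebra α]
    [GeneralizedBooleanAlgebra β] {n : ℕ} (a : Fin n → α) (b : Fin n → β) : Prop :=
  ∀ (S : Finset (Fin n)) (hS : S.Nonempty),
    SameAtomCount (vennCell a S hS) (vennCell b S hS)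

/-! An atom of `β` lies in exactly one Venn cell of a tuple, and the atoms of the cell of
`Fin.snoc b d` indexed by `T` are those of the cell of `b` indexed by the trace of `T` on
`Fin n`, intersected with or removed from the atoms of `d`. So `d` is assembled as a join of
pieces: in each cell `Y` of `b` a piece `d_S ≤ Y` whose atom count, and that of `Y \ d_S`,
match the two halves of the corresponding cell of `a` cut by `c`; and, for the atoms of `c`
below no `a i`, a piece inside an infinite element disjoint from every `b i`. Cutting `Y` into
parts with prescribed atom counts `m + k` uses finitely many atoms when `m` or `k` is finite,
and the splitting hypothesis when both are infinite. -/

open Finset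

theorem IsAtom.supPrime_s19 {α : Type*} [DistribLattice α] [OrderBot α] {p : α} (hp : IsAtom p) :
    SupPrime p := by
  refine ⟨fun hmin => hp.1 hmin.eq_bot, fun {x y} hxy => ?_⟩
  by_contra! h
  rw [hp.not_le_iff_disjoint, hp.not_le_iff_disjoint] at h
  exact hp.1 ((disjoint_sup_right.2 h).eq_bot_of_le hxy)

section Atoms

variable {α : Type*} [GeneralizedBooleanAlgebra α] {p x y : α}

def atomsBelow (x : α) : Set α := {p | IsAtom p ∧ p ≤ x}

theorem mem_atomsBelow : p ∈ atomsBelow x ↔ IsAtom p ∧ p ≤ x := Iff.rfl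

theorem atomsBelow_mono (h : x ≤ y) : atomsBelow x ⊆ atomsBelow y :=
  fun _ hp => ⟨hp.1, hp.2.trans h⟩

theorem atomsBelow_sdiff (x y : α) : atomsBelow (x \ y) = atomsBelow x \ atomsBelow y := by
  ext p
  simp only [Set.mem_sdiff, mem_atomsBelow, le_sdiff]
  constructor
  · rintro ⟨hp, hx, hy⟩
    exact ⟨⟨hp, hx⟩, fun h => hp.not_le_iff_disjoint.2 hy h.2⟩
  · rintro ⟨⟨hp, hx⟩, hy⟩
    exact ⟨hp, hx, hp.not_le_iff_disjoint.1 fun h => hy ⟨hp, h⟩⟩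

theorem atomsBelow_finset_sup {ι : Type*} (s : Finset ι) (f : ι → α) :
    atomsBelow (s.sup f) = ⋃ i ∈ s, atomsBelow (f i) := by
  ext p
  simp only [Set.mem_iUnion, mem_atomsBelow, exists_prop]
  constructor
  · rintro ⟨hp, hle⟩
    obtain ⟨i, hi, hpi⟩ := hp.supPrime_s19.le_finset_sup.1 hle
    exact ⟨i, hi, hp, hpi⟩
  · rintro ⟨i, hi, hp, hpi⟩
    exact ⟨hp, hpi.trans (le_sup hi)⟩

theorem atomsBelow_sup_id {F : Finset α} (hF : ∀ p ∈ F, IsAtom p) :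
    atomsBelow (F.sup id) = F := by
  ext p
  simp only [atomsBelow_finset_sup, Set.mem_iUnion, mem_atomsBelow, id, exists_prop,
    Finset.mem_coe]
  constructor
  · rintro ⟨q, hq, hp, hpq⟩
    rwa [((hF q hq).le_iff_eq hp.1).1 hpq]
  · exact fun hpF => ⟨p, hpF, hF p hpF, le_rfl⟩

theorem sup_id_atomsBelow [IsAtomic α] (hx : (atomsBelow x).Finite) :
    hx.toFinset.sup id = x := by
  refine le_antisymm (Finset.sup_le fun p hp => (hx.mem_toFinset.1 hp).2) ?_
  rw [← sdiff_eq_bot_iff]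
  by_contra hne
  obtain ⟨p, hp, hple⟩ := (eq_bot_or_exists_atom_le _).resolve_left hne
  have hpx : p ∈ atomsBelow x \ atomsBelow (hx.toFinset.sup id) :=
    atomsBelow_sdiff x _ ▸ ⟨hp, hple⟩
  exact hpx.2 ⟨hp, le_sup (f := id) (hx.mem_toFinset.2 hpx.1)⟩

theorem infiniteElt_iff_encard_atomsBelow [IsAtomic α] :
    InfiniteElt x ↔ (atomsBelow x).encard = ⊤ := by
  rw [Set.encard_eq_top_iff, InfiniteElt, not_iff_comm, Set.not_infinite]
  constructor
  · exact fun hx => ⟨hx.toFinset, fun p hp => (hx.mem_toFinset.1 hp).1, sup_id_atomsBelow hx⟩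
  · rintro ⟨F, hF, rfl⟩
    rw [atomsBelow_sup_id hF]
    exact F.finite_toSet

theorem sameAtomCount_iff {β : Type*} [GeneralizedBooleanAlgebra β] (x : α) (y : β) :
    SameAtomCount x y ↔ (atomsBelow x).encard = (atomsBelow y).encard := by
  change ((atomsBelow x).Finite ↔ (atomsBelow y).Finite) ∧
    (atomsBelow x).ncard = (atomsBelow y).ncard ↔ _
  refine ⟨fun ⟨hfin, hcard⟩ => ?_, fun h => ⟨?_, ?_⟩⟩
  · by_cases hx : (atomsBelow x).Finite
    · rw [← hx.cast_ncard_eq, ← (hfin.1 hx).cast_ncard_eq]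
      exact congrArg _ hcard
    · rw [Set.encard_eq_top_iff.2 hx, Set.encard_eq_top_iff.2 (mt hfin.2 hx)]
  · rw [← Set.encard_ne_top_iff, ← Set.encard_ne_top_iff, h]
  · rw [Set.ncard_def, Set.ncard_def, h]

end Atoms

section Split

variable {β : Type*} [GeneralizedBooleanAlgebra β] {Y : β} {m k : ℕ∞}

theorem exists_le_encard_atomsBelow_eq_of_ne_top (hm : m ≠ ⊤)
    (hY : (atomsBelow Y).encard = m + k) :
    ∃ d ≤ Y, (atomsBelow d).encard = m ∧ (atomsBelow (Y \ d)).encard = k := by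
  obtain ⟨T, hTY, hTm⟩ := Set.exists_subset_encard_eq (hY ▸ le_self_add)
  have hT : T.Finite := Set.encard_ne_top_iff.1 (hTm ▸ hm)
  have hd : atomsBelow (hT.toFinset.sup id) = T := by
    rw [atomsBelow_sup_id fun p hp => (hTY (hT.mem_toFinset.1 hp)).1, hT.coe_toFinset]
  refine ⟨hT.toFinset.sup id, Finset.sup_le fun p hp => (hTY (hT.mem_toFinset.1 hp)).2,
    by rw [hd, hTm], (ENat.addLECancellable_of_ne_top hm).inj.1 ?_⟩
  rw [atomsBelow_sdiff, hd, ← hY, ← hTm, add_comm, Set.encard_sdiff_add_encard_of_subset hTY]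

theorem exists_le_encard_atomsBelow_eq [IsAtomic β]
    (hsplit : ∀ u : β, InfiniteElt u →
      ∃ v w : β, InfiniteElt v ∧ InfiniteElt w ∧ v ⊓ w = ⊥ ∧ v ⊔ w = u)
    (hY : (atomsBelow Y).encard = m + k) :
    ∃ d ≤ Y, (atomsBelow d).encard = m ∧ (atomsBelow (Y \ d)).encard = k := by
  by_cases hm : m = ⊤
  · by_cases hk : k = ⊤
    · subst hm hk
      obtain ⟨v, w, hv, hw, hvw, rfl⟩ :=
        hsplit Y (infiniteElt_iff_encard_atomsBelow.2 (by rw [hY, top_add]))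
      refine ⟨v, le_sup_left, infiniteElt_iff_encard_atomsBelow.1 hv, ?_⟩
      rwa [sup_sdiff_left_self, (disjoint_iff.2 hvw).symm.sdiff_eq_left,
        ← infiniteElt_iff_encard_atomsBelow]
    · obtain ⟨d, hdY, hd, hYd⟩ :=
        exists_le_encard_atomsBelow_eq_of_ne_top hk (hY.trans (add_comm m k))
      refine ⟨Y \ d, sdiff_le, hYd, ?_⟩
      rwa [sdiff_sdiff_right_self, inf_of_le_right hdY]
  · exact exists_le_encard_atomsBelow_eq_of_ne_top hm hY

end Split

section Cells

variable {α β : Type*} [GeneralizedBooleanAlgebra α] [GeneralizedBooleanAlgebra β] {n : ℕ}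

def cellAtoms (a : Fin n → α) (S : Finset (Fin n)) : Set α :=
  {p | IsAtom p ∧ ∀ i, p ≤ a i ↔ i ∈ S}

theorem eq_of_mem_cellAtoms {a : Fin n → α} {p : α} {S T : Finset (Fin n)}
    (hS : p ∈ cellAtoms a S) (hT : p ∈ cellAtoms a T) : S = T :=
  Finset.ext fun i => (hS.2 i).symm.trans (hT.2 i)

theorem atomsBelow_vennCell (a : Fin n → α) {S : Finset (Fin n)} (hS : S.Nonempty) :
    atomsBelow (vennCell a S hS) = cellAtoms a S := by
  ext p
  simp only [vennCell, atomsBelow_sdiff, Set.mem_sdiff, mem_atomsBelow, cellAtoms,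
    le_inf'_iff]
  refine ⟨fun ⟨⟨hp, hinf⟩, hsup⟩ => ⟨hp, fun i => ?_⟩, fun ⟨hp, h⟩ => ⟨⟨hp, ?_⟩, ?_⟩⟩
  · by_cases hi : i ∈ S
    · exact iff_of_true (hinf i hi) hi
    · exact iff_of_false (fun hpi => hsup ⟨hp, hpi.trans (le_sup (mem_compl.2 hi))⟩) hi
  · exact fun i hi => (h i).2 hi
  · rintro ⟨-, hle⟩
    obtain ⟨i, hi, hpi⟩ := hp.supPrime_s19.le_finset_sup.1 hle
    exact mem_compl.1 hi ((h i).1 hpi)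

theorem matchingInvariants_iff (a : Fin n → α) (b : Fin n → β) :
    MatchingInvariants a b ↔
      ∀ S : Finset (Fin n), S.Nonempty → (cellAtoms a S).encard = (cellAtoms b S).encard := by
  simp only [MatchingInvariants, sameAtomCount_iff, atomsBelow_vennCell]

variable {a : Fin n → α} {c : α} {T : Finset (Fin (n + 1))}

theorem cellAtoms_snoc_of_last_mem (h : Fin.last n ∈ T) :
    cellAtoms (Fin.snoc a c) T =
      cellAtoms a (T.preimage Fin.castSucc (Fin.castSucc_injective n).injOn) ∩ atomsBelow c := by
  ext p
  simp only [cellAtoms, Fin.forall_fin_succ', Fin.snoc_castSucc, Fin.snoc_last, h, iff_true,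
    Set.mem_ofPred_eq, mem_preimage, Set.mem_inter_iff, mem_atomsBelow]
  tauto

theorem cellAtoms_snoc_of_last_notMem (h : Fin.last n ∉ T) :
    cellAtoms (Fin.snoc a c) T =
      cellAtoms a (T.preimage Fin.castSucc (Fin.castSucc_injective n).injOn) \ atomsBelow c := by
  ext p
  simp only [cellAtoms, Fin.forall_fin_succ', Fin.snoc_castSucc, Fin.snoc_last, h, iff_false,
    Set.mem_ofPred_eq, mem_preimage, Set.mem_sdiff, mem_atomsBelow, not_and]
  tauto

theorem preimage_castSucc_nonempty (hT : T.Nonempty) (h : Fin.last n ∉ T) :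
    (T.preimage Fin.castSucc (Fin.castSucc_injective n).injOn).Nonempty := by
  obtain ⟨j, hj⟩ := hT
  obtain ⟨i, rfl⟩ := Fin.exists_castSucc_eq.2 (ne_of_mem_of_not_mem hj h)
  exact ⟨i, mem_preimage.2 hj⟩

theorem cellAtoms_inter_atomsBelow_sup {b : Fin n → β} {D : Finset (Fin n) → β}
    (hD : ∀ S, atomsBelow (D S) ⊆ cellAtoms b S) (S : Finset (Fin n)) :
    cellAtoms b S ∩ atomsBelow (univ.sup D) = atomsBelow (D S) := by
  ext p
  simp only [atomsBelow_finset_sup, Set.mem_inter_iff, Set.mem_iUnion, mem_univ, exists_const]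
  constructor
  · rintro ⟨hpS, T, hpT⟩
    rwa [eq_of_mem_cellAtoms hpS (hD T hpT)]
  · exact fun hp => ⟨hD S hp, S, hp⟩

theorem exists_cellAtoms_split [IsAtomic β]
    (hsplit : ∀ u : β, InfiniteElt u →
      ∃ v w : β, InfiniteElt v ∧ InfiniteElt w ∧ v ⊓ w = ⊥ ∧ v ⊔ w = u)
    (hdisj : ∀ x : β, ∃ u : β, InfiniteElt u ∧ x ⊓ u = ⊥)
    {a : Fin n → α} {b : Fin n → β} (hab : MatchingInvariants a b) (c : α)
    (S : Finset (Fin n)) :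
    ∃ d : β, atomsBelow d ⊆ cellAtoms b S ∧
      (atomsBelow d).encard = (cellAtoms a S ∩ atomsBelow c).encard ∧
      (S.Nonempty →
        (cellAtoms b S \ atomsBelow d).encard = (cellAtoms a S \ atomsBelow c).encard) := by
  rcases S.eq_empty_or_nonempty with rfl | hS
  · obtain ⟨u, hu, hbu⟩ := hdisj (univ.sup b)
    obtain ⟨d, hdu, hd, -⟩ := exists_le_encard_atomsBelow_eq hsplit
      (m := (cellAtoms a ∅ ∩ atomsBelow c).encard) (k := ⊤)
      (by rw [add_top, ← infiniteElt_iff_encard_atomsBelow]; exact hu)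
    refine ⟨d, fun p hp => ⟨hp.1, fun i => iff_of_false (fun hpi => hp.1.1 ?_) (notMem_empty i)⟩,
      hd, fun h => absurd h not_nonempty_empty⟩
    exact le_bot_iff.1 (hbu ▸ le_inf (hpi.trans (le_sup (mem_univ i))) (hp.2.trans hdu))
  · have hY : (atomsBelow (vennCell b S hS)).encard =
        (cellAtoms a S ∩ atomsBelow c).encard + (cellAtoms a S \ atomsBelow c).encard := by
      rw [atomsBelow_vennCell, ← (matchingInvariants_iff a b).1 hab S hS, add_comm,
        Set.encard_sdiff_add_encard_inter]
    obtain ⟨d, hdY, hd, hYd⟩ := exists_le_encard_atomsBelow_eq hsplit hY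
    refine ⟨d, atomsBelow_vennCell b hS ▸ atomsBelow_mono hdY, hd, fun _ => ?_⟩
    rwa [← atomsBelow_vennCell b hS, ← atomsBelow_sdiff]

end Cells

theorem stmt19_general {α β : Type*} [GeneralizedBooleanAlgebra α] [GeneralizedBooleanAlgebra β]
    [IsAtomic β]
    (hsplitβ : ∀ u : β, InfiniteElt u →
      ∃ v w : β, InfiniteElt v ∧ InfiniteElt w ∧ v ⊓ w = ⊥ ∧ v ⊔ w = u)
    (hdisjβ : ∀ x : β, ∃ u : β, InfiniteElt u ∧ x ⊓ u = ⊥)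
    {n : ℕ} (a : Fin n → α) (b : Fin n → β)
    (hab : MatchingInvariants a b) (c : α) :
    ∃ d : β, MatchingInvariants (Fin.snoc a c) (Fin.snoc b d) := by
  choose D hDcell hDin hDout using exists_cellAtoms_split hsplitβ hdisjβ hab c
  refine ⟨univ.sup D, (matchingInvariants_iff _ _).2 fun T hT => ?_⟩
  by_cases hlast : Fin.last n ∈ T
  · rw [cellAtoms_snoc_of_last_mem hlast, cellAtoms_snoc_of_last_mem hlast,
      cellAtoms_inter_atomsBelow_sup hDcell, hDin]
  · rw [cellAtoms_snoc_of_last_notMem hlast, cellAtoms_snoc_of_last_notMem hlast,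
      ← Set.sdiff_self_inter (s := cellAtoms b _), cellAtoms_inter_atomsBelow_sup hDcell,
      hDout _ (preimage_castSucc_nonempty hT hlast)]

/-- The back-and-forth extension lemma: in atomic generalized Boolean algebras with no
top, in which every infinite element splits into two disjoint infinite elements and
every element is disjoint from some infinite element, any tuples with matching cell
invariants can be extended by one more element on either side preserving the
invariants. -/
theorem stmt19 {α β : Type*} [GeneralizedBooleanAlgebra α] [GeneralizedBooleanAlgebra β]
    [IsAtomic α] [IsAtomic β]
    (htopα : ¬ ∃ t : α, ∀ x : α, x ≤ t) (htopβ : ¬ ∃ t : β, ∀ x : β, x ≤ t)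
    (hsplitα : ∀ u : α, InfiniteElt u →
      ∃ v w : α, InfiniteElt v ∧ InfiniteElt w ∧ v ⊓ w = ⊥ ∧ v ⊔ w = u)
    (hsplitβ : ∀ u : β, InfiniteElt u →
      ∃ v w : β, InfiniteElt v ∧ InfiniteElt w ∧ v ⊓ w = ⊥ ∧ v ⊔ w = u)
    (hdisjα : ∀ x : α, ∃ u : α, InfiniteElt u ∧ x ⊓ u = ⊥)
    (hdisjβ : ∀ x : β, ∃ u : β, InfiniteElt u ∧ x ⊓ u = ⊥)
    {n : ℕ} (a : Fin n → α) (b : Fin n → β)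
    (hab : MatchingInvariants a b) (c : α) :
    ∃ d : β, MatchingInvariants (Fin.snoc a c) (Fin.snoc b d) :=
  stmt19_general hsplitβ hdisjβ a b hab c
end
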